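/- Let N > 6 be an integer and ζ = exp(2πi/N). Let r, s, c, d be integers with 0 < r ≤ N/2, 0 < s ≤ N/2, r ≠ s, and gcd(c,d) = 1. Put r* = μ(rc)·r·d and s* = μ(sc)·s·d. If {rc} = {sc} and this common value is 0 or N/2, then ζ^{r* + s*} ≠ 1. -/

import Mathlib

open Complex

/-- ζ = exp(2πi/N), a primitive N-th root of unity. -/
noncomputable def zeta (N : ℤ) : ℂ := Complex.exp (2 * Real.pi * Complex.I / N)

/-- q = exp(2πiτ/N). -/
noncomputable def qq (N : ℤ) (τ : ℂ) : ℂ := Complex.exp (2 * Real.pi * Complex.I * τ / N)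

/-- {x}: the unique integer with 0 ≤ {x} ≤ N/2 and x ≡ ±{x} (mod N). -/
def br (N x : ℤ) : ℤ := min (x % N) (N - x % N)

/-- μ(x) ∈ {1,-1}: μ(x) = 1 if x ≡ 0 or N/2 (mod N); otherwise x ≡ μ(x){x} (mod N). -/
def mu (N x : ℤ) : ℤ := if 2 * (x % N) ≤ N then 1 else -1

/-- Weierstrass ℘-function relative to the lattice L_τ = ℤ + ℤτ. -/
noncomputable def wp (τ z : ℂ) : ℂ :=
  1 / z ^ 2 + ∑' p : {p : ℤ × ℤ // p ≠ 0},
    (1 / (z - ((p.1.1 : ℂ) + (p.1.2 : ℂ) * τ)) ^ 2 - 1 / ((p.1.1 : ℂ) + (p.1.2 : ℂ) * τ) ^ 2)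

/-- φ_s(τ) = (2πi)⁻² ℘(s/N; L_τ) − 1/12. -/
noncomputable def phi (N s : ℤ) (τ : ℂ) : ℂ :=
  (1 / (2 * Real.pi * Complex.I) ^ 2) * wp τ ((s : ℂ) / (N : ℂ)) - 1 / 12

/-- Λ_k(τ) = (℘(k/N;L_τ) − ℘(1/N;L_τ))/(℘(2/N;L_τ) − ℘(1/N;L_τ)). -/
noncomputable def Lam (N k : ℤ) (τ : ℂ) : ℂ :=
  (wp τ ((k : ℂ) / (N : ℂ)) - wp τ (1 / (N : ℂ))) /
    (wp τ ((2 : ℂ) / (N : ℂ)) - wp τ (1 / (N : ℂ)))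

/-- u_s = ζ^{s*} q^{{sc}} where s* = μ(sc)sd, for the lower row (c,d) of A. -/
noncomputable def uu (N s c d : ℤ) (τ : ℂ) : ℂ :=
  zeta N ^ (mu N (s * c) * s * d) * qq N τ ^ br N (s * c)


/-!
When {x} is 0 or N/2, the residue of x mod N is {x} itself, so μ(x) = 1. Hence
r* + s* = (r + s)d, while rc ≡ {rc} = {sc} ≡ sc and 2{rc} ≡ 0 give N ∣ (r + s)c. If also
N ∣ (r + s)d, coprimality of c and d forces N ∣ r + s, impossible as 0 < r + s < N.
-/

lemma isPrimitiveRoot_zeta {N : ℤ} (hN : 0 < N) : IsPrimitiveRoot (zeta N) N.toNat := by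
  have h := Complex.isPrimitiveRoot_exp N.toNat (by omega)
  rwa [show ((N.toNat : ℕ) : ℂ) = (N : ℂ) by exact_mod_cast Int.toNat_of_nonneg hN.le] at h

lemma IsCoprime.dvd_of_dvd_mul_of_dvd_mul {R : Type*} [CommRing R] {n a c d : R}
    (hcd : IsCoprime c d) (hc : n ∣ a * c) (hd : n ∣ a * d) : n ∣ a := by
  obtain ⟨u, v, huv⟩ := hcd
  have ha : a = a * c * u + a * d * v := by linear_combination -a * huv
  rw [ha]
  exact dvd_add (hc.mul_right u) (hd.mul_right v)

section SelfDual

variable {N x : ℤ}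

lemma emod_eq_br_of_br_self_dual (hN : 0 < N) (h : br N x = 0 ∨ 2 * br N x = N) :
    x % N = br N x := by
  have := Int.emod_lt_of_pos x hN
  unfold br at h ⊢
  omega

lemma mu_eq_one_of_br_self_dual (hN : 0 < N) (h : br N x = 0 ∨ 2 * br N x = N) :
    mu N x = 1 := by
  have hx := emod_eq_br_of_br_self_dual hN h
  rw [mu, if_pos (by unfold br at hx h; omega)]

lemma dvd_add_mul_of_br_eq_self_dual {r s c : ℤ} (hN : 0 < N)
    (h : br N (r * c) = br N (s * c)) (h0 : br N (r * c) = 0 ∨ 2 * br N (r * c) = N) :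
    N ∣ (r + s) * c := by
  have hrc := emod_eq_br_of_br_self_dual hN h0
  have hsc := emod_eq_br_of_br_self_dual hN (h ▸ h0)
  have hN2 : N ∣ 2 * br N (r * c) := by
    rcases h0 with h0 | h0
    · simp [h0]
    · exact ⟨1, by omega⟩
  have hsum : (r + s) * c = N * (r * c / N + s * c / N) + 2 * br N (r * c) := by
    linear_combination (Int.emod_add_mul_ediv (r * c) N).symm +
      (Int.emod_add_mul_ediv (s * c) N).symm + hrc + hsc - h
  rw [hsum]
  exact dvd_add (dvd_mul_right N _) hN2

end SelfDual

theorem stmt1_general (N r s c d : ℤ)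
    (hr0 : 0 < r) (hr : 2 * r ≤ N) (hs0 : 0 < s) (hs : 2 * s ≤ N) (hrs : r ≠ s)
    (hcd : Int.gcd c d = 1)
    (h : br N (r * c) = br N (s * c))
    (h0 : br N (r * c) = 0 ∨ 2 * br N (r * c) = N) :
    zeta N ^ (mu N (r * c) * r * d + mu N (s * c) * s * d) ≠ 1 := by
  intro heq
  have hN : 0 < N := by omega
  rw [(isPrimitiveRoot_zeta hN).zpow_eq_one_iff_dvd, Int.toNat_of_nonneg hN.le,
    mu_eq_one_of_br_self_dual hN h0, mu_eq_one_of_br_self_dual hN (h ▸ h0)] at heq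
  have hc : N ∣ (r + s) * c := dvd_add_mul_of_br_eq_self_dual hN h h0
  have hd : N ∣ (r + s) * d := by simpa only [one_mul, add_mul] using heq
  have hdvd := (Int.isCoprime_iff_gcd_eq_one.mpr hcd).dvd_of_dvd_mul_of_dvd_mul hc hd
  have hle : N ≤ r + s := Int.le_of_dvd (by omega) hdvd
  omega

/-- If {rc} = {sc} and this common value is 0 or N/2, then ζ^{r*+s*} ≠ 1. -/
theorem stmt1 (N r s c d : ℤ) (hN : 6 < N)
    (hr0 : 0 < r) (hr : 2 * r ≤ N) (hs0 : 0 < s) (hs : 2 * s ≤ N) (hrs : r ≠ s)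
    (hcd : Int.gcd c d = 1)
    (h : br N (r * c) = br N (s * c))
    (h0 : br N (r * c) = 0 ∨ 2 * br N (r * c) = N) :
    zeta N ^ (mu N (r * c) * r * d + mu N (s * c) * s * d) ≠ 1 :=
  stmt1_general N r s c d hr0 hr hs0 hs hrs hcd h h0
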